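/- arXiv:2409.02470 — 2 statements merged into one kernel-verified Lean document; each statement's English description precedes it below -/
import Mathlib

section
/- Let U be a d×d unitary matrix and ψ a rank-one projection (pure state) on ℂᵈ. Define the pseudo-density matrix of a unitary channel: R^T₁ = (1/2)(|Ψ_U⟩⟨Ψ_U|(ψ⊗I) + (ψ⊗I)|Ψ_U⟩⟨Ψ_U|), where |Ψ_U⟩ = Σᵢ |i⟩ ⊗ U|i⟩ is the unnormalized maximally entangled vector associated to U (so ⟨Ψ_U|Ψ_U⟩ = d). Then Tr((R^T₁)²) = (d+1)/2. -/
/-!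
Write `A = |Ψ_U⟩⟨Ψ_U|` and `P = ψ ⊗ I`, so `R = (AP + PA)/2`. Since `A` has rank one,
`A M A = ⟨Ψ_U|M|Ψ_U⟩ A` for every `M`; with `P² = P` and the cyclicity of the trace this
gives `Tr((AP + PA)²) = 2c² + 2cn` with `c = ⟨Ψ_U|P|Ψ_U⟩` and `n = ⟨Ψ_U|Ψ_U⟩`. Both are
traces against `U†U = I`: `Ψ_U = vec U` and `(M ⊗ I) vec U = vec (U Mᵀ)`, so `c = Tr ψ = 1`
and `n = d`.
-/

open Kronecker Matrix

namespace Matrix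

section RankOne

variable {R n : Type*} [CommRing R] [Fintype n]

theorem vecMulVec_mul_mul_vecMulVec (u v w x : n → R) (M : Matrix n n R) :
    vecMulVec u v * M * vecMulVec w x = (v ⬝ᵥ M *ᵥ w) • vecMulVec u x := by
  rw [Matrix.mul_assoc, mul_vecMulVec, vecMulVec_mul_vecMulVec, vecMulVec_smul]

theorem trace_vecMulVec_mul (v w : n → R) (M : Matrix n n R) :
    trace (vecMulVec v w * M) = w ⬝ᵥ M *ᵥ v := by
  rw [trace_mul_comm, mul_vecMulVec, trace_vecMulVec, dotProduct_comm]

theorem trace_sq_vecMulVec_mul_add_mul_vecMulVec (v w : n → R) {P : Matrix n n R}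
    (hP : IsIdempotentElem P) :
    trace ((vecMulVec v w * P + P * vecMulVec v w) * (vecMulVec v w * P + P * vecMulVec v w)) =
      2 * ((w ⬝ᵥ P *ᵥ v) ^ 2 + (w ⬝ᵥ P *ᵥ v) * (w ⬝ᵥ v)) := by
  set A := vecMulVec v w
  have hAPA : A * P * A = (w ⬝ᵥ P *ᵥ v) • A := vecMulVec_mul_mul_vecMulVec v w v w P
  have hAP : trace (A * P) = w ⬝ᵥ P *ᵥ v := trace_vecMulVec_mul v w P
  have hA : trace A = w ⬝ᵥ v := (trace_vecMulVec v w).trans (dotProduct_comm v w)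
  have hPAP : trace (A * P * (P * A)) = (w ⬝ᵥ P *ᵥ v) * (w ⬝ᵥ v) := by
    rw [← Matrix.mul_assoc, Matrix.mul_assoc A, hP.eq, hAPA, trace_smul, hA, smul_eq_mul]
  have hAPAP : trace (A * P * (A * P)) = (w ⬝ᵥ P *ᵥ v) ^ 2 := by
    rw [← Matrix.mul_assoc, hAPA, smul_mul, trace_smul, hAP, smul_eq_mul, sq]
  have hPAPA : trace (P * A * (P * A)) = (w ⬝ᵥ P *ᵥ v) ^ 2 := by
    rw [Matrix.mul_assoc, ← Matrix.mul_assoc A, hAPA, Matrix.mul_smul, trace_smul, trace_mul_comm,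
      hAP, smul_eq_mul, sq]
  simp only [Matrix.add_mul, Matrix.mul_add, trace_add]
  rw [trace_mul_comm (P * A) (A * P), hAPAP, hPAP, hPAPA]
  ring

end RankOne

section Unitary

variable {n : Type*} [Fintype n] [DecidableEq n]

theorem star_vec_dotProduct_vec_of_mem_unitaryGroup {U : Matrix n n ℂ}
    (hU : U ∈ unitaryGroup n ℂ) : star (vec U) ⬝ᵥ vec U = Fintype.card n := by
  rw [star_vec_dotProduct_vec, ← star_eq_conjTranspose, mem_unitaryGroup_iff'.mp hU, trace_one]

theorem star_vec_dotProduct_kronecker_one_mulVec_vec {U : Matrix n n ℂ}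
    (hU : U ∈ unitaryGroup n ℂ) (M : Matrix n n ℂ) :
    star (vec U) ⬝ᵥ (M ⊗ₖ 1) *ᵥ vec U = trace M := by
  rw [kronecker_mulVec_vec, Matrix.one_mul, star_vec_dotProduct_vec, ← Matrix.mul_assoc,
    ← star_eq_conjTranspose, mem_unitaryGroup_iff'.mp hU, Matrix.one_mul, trace_transpose]

end Unitary

variable {n : Type*} [Fintype n]

theorem star_dotProduct_self_eq_one {φ : n → ℂ} (hφ : ∑ i, Complex.normSq (φ i) = 1) :
    star φ ⬝ᵥ φ = 1 := by
  simp only [dotProduct, Pi.star_apply, RCLike.star_def, ← Complex.normSq_eq_conj_mul_self]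
  exact_mod_cast hφ

theorem isIdempotentElem_vecMulVec_star_kronecker_one {m : Type*} [Fintype m] [DecidableEq m]
    {φ : n → ℂ} (hφ : star φ ⬝ᵥ φ = 1) :
    IsIdempotentElem (vecMulVec φ (star φ) ⊗ₖ (1 : Matrix m m ℂ)) := by
  rw [IsIdempotentElem, ← mul_kronecker_mul, Matrix.one_mul, vecMulVec_mul_vecMulVec, hφ,
    one_smul]

end Matrix

theorem stmt_6_general {d : ℕ}
    (U : Matrix (Fin d) (Fin d) ℂ) (hU : U ∈ Matrix.unitaryGroup (Fin d) ℂ)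
    (φ : Fin d → ℂ) (hφ : ∑ i, Complex.normSq (φ i) = 1)
    (Ψ : Fin d × Fin d → ℂ) (hΨ : Ψ = fun p => U p.2 p.1)
    (R : Matrix (Fin d × Fin d) (Fin d × Fin d) ℂ)
    (hR : R = ((1 : ℂ) / 2) •
        (Matrix.vecMulVec Ψ (star Ψ) * (Matrix.vecMulVec φ (star φ) ⊗ₖ 1)
          + (Matrix.vecMulVec φ (star φ) ⊗ₖ 1) * Matrix.vecMulVec Ψ (star Ψ))) :
    (R * R).trace = ((d : ℂ) + 1) / 2 := by
  replace hΨ : Ψ = vec U := hΨ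
  have hφ1 := star_dotProduct_self_eq_one hφ
  have hc : star Ψ ⬝ᵥ (vecMulVec φ (star φ) ⊗ₖ 1) *ᵥ Ψ = 1 := by
    rw [hΨ, star_vec_dotProduct_kronecker_one_mulVec_vec hU, trace_vecMulVec, dotProduct_comm,
      hφ1]
  have hn : star Ψ ⬝ᵥ Ψ = d := by
    rw [hΨ, star_vec_dotProduct_vec_of_mem_unitaryGroup hU, Fintype.card_fin]
  rw [hR, smul_mul_smul, trace_smul,
    trace_sq_vecMulVec_mul_add_mul_vecMulVec Ψ (star Ψ)
      (isIdempotentElem_vecMulVec_star_kronecker_one hφ1), hc, hn, smul_eq_mul]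
  ring

theorem stmt_6 {d : ℕ} (hd : 1 ≤ d)
    (U : Matrix (Fin d) (Fin d) ℂ) (hU : U ∈ Matrix.unitaryGroup (Fin d) ℂ)
    (φ : Fin d → ℂ) (hφ : ∑ i, Complex.normSq (φ i) = 1)
    (Ψ : Fin d × Fin d → ℂ) (hΨ : Ψ = fun p => U p.2 p.1)
    (R : Matrix (Fin d × Fin d) (Fin d × Fin d) ℂ)
    (hR : R = ((1 : ℂ) / 2) •
        (Matrix.vecMulVec Ψ (star Ψ) * (Matrix.vecMulVec φ (star φ) ⊗ₖ 1)
          + (Matrix.vecMulVec φ (star φ) ⊗ₖ 1) * Matrix.vecMulVec Ψ (star Ψ))) :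
    (R * R).trace = ((d : ℂ) + 1) / 2 :=
  stmt_6_general U hU φ hφ Ψ hΨ R hR
end

section
/- Consider the single-qubit partial replacement channel N with Kraus operators K₁ = c·I + is|0⟩⟨0| and K₂ = is|0⟩⟨1|, where c = cos θ, s = sin θ. Then N is trace preserving (K₁†K₁ + K₂†K₂ = I), and the pseudo-density matrix R = (1/2)[(ρ⊗I)Λ_N + Λ_N(ρ⊗I)] with ρ = |0⟩⟨0| satisfies Tr(R²) − 1 = c²/2. -/
/-!
Multiplying by `ρ ⊗ 1` with `ρ = |0⟩⟨0|` keeps only the blocks `N(|j⟩⟨i|)` of the Choi matrix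
with `i = 0` or `j = 0`. On those the channel is diagonal once `c² + s² = 1`: it fixes `|0⟩⟨0|` and
multiplies the coherences by `c(c ± is)`. Hence `R = |00⟩⟨00| + a|01⟩⟨10| + b|10⟩⟨01|` with
`ab = c²(c² + s²)/4 = c²/4`, and `Tr R² = 1 + 2ab = 1 + c²/2`.
-/

open Kronecker Matrix Complex

section Choi

variable {n α : Type*} [Fintype n] [DecidableEq n]

def choiMatrix [Semiring α] (N : Matrix n n α → Matrix n n α) : Matrix (n × n) (n × n) α :=
  ∑ i, ∑ j, single i j (1 : α) ⊗ₖ N (single j i 1)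

theorem choiMatrix_apply [Semiring α] (N : Matrix n n α → Matrix n n α) (p q : n × n) :
    choiMatrix N p q = N (single q.1 p.1 1) p.2 q.2 := by
  simp [choiMatrix, Matrix.sum_apply, single_apply, ite_and]

def pseudoDensityMatrix [Field α] (ρ : Matrix n n α) (Λ : Matrix (n × n) (n × n) α) :
    Matrix (n × n) (n × n) α :=
  ((1 : α) / 2) • ((ρ ⊗ₖ 1) * Λ + Λ * (ρ ⊗ₖ 1))

theorem single_kronecker_one_mul_apply [Semiring α] (i : n) (M : Matrix (n × n) (n × n) α)
    (p q : n × n) :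
    ((single i i (1 : α) ⊗ₖ (1 : Matrix n n α)) * M) p q = if p.1 = i then M p q else 0 := by
  simp only [mul_apply, kroneckerMap_apply, single_apply, ite_and, one_apply, mul_ite, mul_one,
    mul_zero, ite_mul, one_mul, zero_mul, Fintype.sum_prod_type, eq_comm, Finset.sum_ite_eq',
    Finset.mem_univ, ↓reduceIte, Finset.sum_ite_irrel, Finset.sum_ite_eq, Finset.sum_const_zero]
  split_ifs with h <;> simp [h]

theorem mul_single_kronecker_one_apply [Semiring α] (i : n) (M : Matrix (n × n) (n × n) α)
    (p q : n × n) :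
    (M * (single i i (1 : α) ⊗ₖ (1 : Matrix n n α))) p q = if q.1 = i then M p q else 0 := by
  simp only [mul_apply, kroneckerMap_apply, single_apply, ite_and, one_apply, eq_comm, mul_ite,
    mul_one, mul_zero, Fintype.sum_prod_type, Finset.sum_ite_eq', Finset.mem_univ, ↓reduceIte,
    Finset.sum_ite_eq]
  split_ifs with h <;> simp [h]

theorem pseudoDensityMatrix_single_choiMatrix_apply [Field α] (i : n)
    (N : Matrix n n α → Matrix n n α) (p q : n × n) :
    pseudoDensityMatrix (single i i 1) (choiMatrix N) p q =
      ((if p.1 = i then 1 else 0) + (if q.1 = i then 1 else 0)) / 2 *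
        N (single q.1 p.1 1) p.2 q.2 := by
  simp only [pseudoDensityMatrix, Matrix.smul_apply, Matrix.add_apply,
    single_kronecker_one_mul_apply, mul_single_kronecker_one_apply, choiMatrix_apply, smul_eq_mul]
  split_ifs <;> ring

end Choi

theorem trace_sq_single_add_smul_single {m α : Type*} [Fintype m] [DecidableEq m] [CommRing α]
    {i j k : m} (hij : i ≠ j) (hik : i ≠ k) (hjk : j ≠ k) (a b : α) :
    let M := single i i (1 : α) + a • single j k 1 + b • single k j 1
    (M * M).trace = 1 + 2 * a * b := by
  intro M
  simp only [M, smul_single, smul_eq_mul, mul_one, mul_add, add_mul, single_mul_single_same,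
    single_mul_single_of_ne, ne_eq, hij, hik, hjk, hij.symm, hik.symm, hjk.symm, not_false_eq_true,
    add_zero, zero_add, trace_add, trace_single_eq_same]
  ring

namespace PartialReplacement

def kraus₁ (c s : ℝ) : Matrix (Fin 2) (Fin 2) ℂ := (c : ℂ) • 1 + (I * s) • single 0 0 1

def kraus₂ (s : ℝ) : Matrix (Fin 2) (Fin 2) ℂ := (I * s) • single 0 1 1

def channel (c s : ℝ) (X : Matrix (Fin 2) (Fin 2) ℂ) : Matrix (Fin 2) (Fin 2) ℂ :=
  kraus₁ c s * X * (kraus₁ c s)ᴴ + kraus₂ s * X * (kraus₂ s)ᴴ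

variable {c s : ℝ}

theorem kraus_conjTranspose_mul_add_eq_one (h : c ^ 2 + s ^ 2 = 1) :
    (kraus₁ c s)ᴴ * kraus₁ c s + (kraus₂ s)ᴴ * kraus₂ s = 1 := by
  have h' : (c : ℂ) ^ 2 + (s : ℂ) ^ 2 = 1 := by exact_mod_cast h
  ext i j
  fin_cases i <;> fin_cases j <;>
    simp [kraus₁, kraus₂, mul_apply, Fin.sum_univ_two, one_apply, single_apply]
  all_goals linear_combination h' - (s : ℂ) ^ 2 * I_sq

theorem channel_eq (h : c ^ 2 + s ^ 2 = 1) (X : Matrix (Fin 2) (Fin 2) ℂ) :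
    channel c s X = !![X 0 0 + s ^ 2 * X 1 1, c * (c + I * s) * X 0 1;
                       c * (c - I * s) * X 1 0, c ^ 2 * X 1 1] := by
  have h' : (c : ℂ) ^ 2 + (s : ℂ) ^ 2 = 1 := by exact_mod_cast h
  ext i j
  fin_cases i <;> fin_cases j <;>
    simp [channel, kraus₁, kraus₂, mul_apply, Fin.sum_univ_two, one_apply, single_apply]
  · linear_combination X 0 0 * h' - (s : ℂ) ^ 2 * (X 0 0 + X 1 1) * I_sq
  all_goals ring

theorem pseudoDensityMatrix_choiMatrix_channel (h : c ^ 2 + s ^ 2 = 1) :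
    pseudoDensityMatrix (single 0 0 1) (choiMatrix (channel c s)) =
      single (0, 0) (0, 0) 1 + (c * (c - I * s) / 2) • single (0, 1) (1, 0) 1
        + (c * (c + I * s) / 2) • single (1, 0) (0, 1) 1 := by
  ext ⟨a, b⟩ ⟨a', b'⟩
  rw [pseudoDensityMatrix_single_choiMatrix_apply, channel_eq h]
  fin_cases a <;> fin_cases b <;> fin_cases a' <;> fin_cases b' <;> simp
  all_goals ring

end PartialReplacement

theorem stmt_18 (θ : ℝ) (c s : ℝ) (hc : c = Real.cos θ) (hs : s = Real.sin θ)
    (K₁ K₂ : Matrix (Fin 2) (Fin 2) ℂ)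
    (hK₁ : K₁ = (c : ℂ) • (1 : Matrix (Fin 2) (Fin 2) ℂ)
        + (Complex.I * s) • Matrix.single 0 0 1)
    (hK₂ : K₂ = (Complex.I * s) • Matrix.single 0 1 1)
    (N : Matrix (Fin 2) (Fin 2) ℂ → Matrix (Fin 2) (Fin 2) ℂ)
    (hN : N = fun X => K₁ * X * K₁ᴴ + K₂ * X * K₂ᴴ)
    (Λ : Matrix (Fin 2 × Fin 2) (Fin 2 × Fin 2) ℂ)
    (hΛ : Λ = ∑ i, ∑ j, (Matrix.single i j (1 : ℂ)) ⊗ₖ N (Matrix.single j i 1))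
    (ρ : Matrix (Fin 2) (Fin 2) ℂ) (hρ : ρ = Matrix.single 0 0 1)
    (R : Matrix (Fin 2 × Fin 2) (Fin 2 × Fin 2) ℂ)
    (hR : R = ((1 : ℂ) / 2) • ((ρ ⊗ₖ 1) * Λ + Λ * (ρ ⊗ₖ 1))) :
    K₁ᴴ * K₁ + K₂ᴴ * K₂ = 1 ∧ (R * R).trace - 1 = (c : ℂ) ^ 2 / 2 := by
  have hcs : c ^ 2 + s ^ 2 = 1 := by rw [hc, hs]; exact Real.cos_sq_add_sin_sq θ
  have hN' : N = PartialReplacement.channel c s := by rw [hN, hK₁, hK₂]; rfl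
  have hR' : R = pseudoDensityMatrix ρ (choiMatrix N) := by rw [hR, hΛ]; rfl
  rw [hN', hρ] at hR'
  refine ⟨hK₁ ▸ hK₂ ▸ PartialReplacement.kraus_conjTranspose_mul_add_eq_one hcs, ?_⟩
  have hcs' : (c : ℂ) ^ 2 + (s : ℂ) ^ 2 = 1 := by exact_mod_cast hcs
  rw [hR', PartialReplacement.pseudoDensityMatrix_choiMatrix_channel hcs,
    trace_sq_single_add_smul_single (by decide) (by decide) (by decide)]
  linear_combination (c : ℂ) ^ 2 / 2 * hcs' - (c : ℂ) ^ 2 * (s : ℂ) ^ 2 / 2 * I_sq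
end
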